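/- arXiv:math-ph/0512070 — 3 statements merged into one kernel-verified Lean document; each statement's English description precedes it below -/
import Mathlib

section
/- For all measurable sets Δ, Δ' ⊆ Γ₁ with λ(Δ) < ∞ and λ(Δ') < ∞, the operators A(Δ') and A*(Δ) satisfy the canonical commutation relation on D: for every f ∈ D, A(Δ')(A*(Δ)f) − A*(Δ)(A(Δ')f) = λ(Δ ∩ Δ') · f. -/
/-!
Fock space over the chain space Γ = ⋃ₙ Γₙ, Γₙ = time-ordered n-tuples in
Γ₁ = [0,∞) × Λ.  Creation `create Δ` and annihilation `annihilate lam Δ`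
operators satisfy the CCR on the domain D = ⋃_{ξ>1} D(ξ).
-/

open MeasureTheory

namespace QuantumChains

variable {Λ : Type*} [MeasurableSpace Λ]

/-- The measure `dt ⊗ λ(d𝐱)` on `Γ₁ = [0,∞) × Λ` (modeled as `ℝ × Λ` with the
time coordinate measure supported on `[0,∞)`). -/
noncomputable def baseMeasure (lam : Measure Λ) : Measure (ℝ × Λ) :=
  (volume.restrict (Set.Ici (0 : ℝ))).prod lam

/-- The space of chains: disjoint union of the `n`-tuples of points of `Γ₁`. -/
abbrev Chains (Λ : Type*) := Σ n : ℕ, (Fin n → ℝ × Λ)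

/-- The set `Γₙ` of time-ordered `n`-tuples. -/
def ordered (Λ : Type*) (n : ℕ) : Set (Fin n → ℝ × Λ) :=
  {χ | StrictMono fun i => (χ i).1}

/-- The measure `λ(dχ)` on the chain space `Γ`: on `Γₙ` it is the `n`-fold
product of `baseMeasure lam`, restricted to time-ordered tuples. -/
noncomputable def chainMeasure (lam : Measure Λ) [SigmaFinite lam] :
    Measure (Chains Λ) :=
  Measure.sum fun n =>
    ((Measure.pi fun _ : Fin n => baseMeasure lam).restrict (ordered Λ n)).map
      (Sigma.mk n)

/-- Insertion `χ ⊔ x` of a point `x` into a chain `χ` (at the position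
determined by the time coordinate). -/
noncomputable def insertChain {n : ℕ} (χ : Fin n → ℝ × Λ) (x : ℝ × Λ) (j : Fin (n + 1)) :
    ℝ × Λ :=
  if h1 : (j : ℕ) < ((Finset.univ : Finset (Fin n)).filter
      fun i => (χ i).1 < x.1).card then
    χ ⟨j, h1.trans_le (card_finset_fin_le _)⟩
  else if h2 : (j : ℕ) = ((Finset.univ : Finset (Fin n)).filter
      fun i => (χ i).1 < x.1).card then x
  else
    χ ⟨(j : ℕ) - 1, by
      have hk := card_finset_fin_le
        ((Finset.univ : Finset (Fin n)).filter fun i => (χ i).1 < x.1)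
      have hj := j.isLt
      omega⟩

/-- The annihilation operator `(A(Δ)f)(χ) = ∫_Δ f(χ ⊔ x) λ(dx)`. -/
noncomputable def annihilate (lam : Measure Λ) (Δ : Set (ℝ × Λ))
    (f : Chains Λ → ℂ) : Chains Λ → ℂ := fun χ =>
  ∫ x in Δ, f ⟨χ.1 + 1, insertChain χ.2 x⟩ ∂(baseMeasure lam)

/-- The creation operator `(A*(Δ)f)(χ) = Σ_{x ∈ χ ∩ Δ} f(χ ∖ x)`. -/
noncomputable def create (Δ : Set (ℝ × Λ)) (f : Chains Λ → ℂ) :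
    Chains Λ → ℂ := fun χ =>
  match χ with
  | ⟨0, _⟩ => 0
  | ⟨n + 1, c⟩ => ∑ i : Fin (n + 1),
      Δ.indicator (fun _ => f ⟨n, i.removeNth c⟩) (c i)

/-- The domain `D = ⋃_{ξ > 1} D(ξ)`,
`D(ξ) = {f ∈ L²(Γ) : ∫ ξ^{|χ|} |f(χ)|² λ(dχ) < ∞}`. -/
def memD (lam : Measure Λ) [SigmaFinite lam] (f : Chains Λ → ℂ) : Prop :=
  Measurable f ∧ ∃ ξ : ℝ, 1 < ξ ∧
    ∫⁻ χ, ENNReal.ofReal (ξ ^ χ.1) * (‖f χ‖₊ : ENNReal) ^ 2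
      ∂(chainMeasure lam) < ⊤

end QuantumChains

/-!
`A(Δ')` integrates over `x ∈ Δ'` the pointwise annihilator `a_x f = f(· ⊔ x)`. For a time-ordered
chain `χ`, the points of `χ ⊔ x` are `x` and the points `y` of `χ`, and removing `y` from `χ ⊔ x`
leaves `(χ ∖ y) ⊔ x`. Hence `a_x A*(Δ) f = 1_Δ(x) f + A*(Δ) a_x f` pointwise, and integrating
over `Δ'` yields the relation, provided the finite sum defining `A*(Δ)` may be exchanged with the
integral, i.e. provided `x ↦ f((χ ∖ y) ⊔ x)` is integrable on `Δ'` for almost every `χ`.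

This integrability comes from `f ∈ L²(Γₙ₊₁)`: each insertion `(τ, x) ↦ τ ⊔ x` agrees with one of
the `n + 1` measure-preserving maps `(τ, x) ↦ insertNth k x τ`, so by Tonelli
`∫∫ |f(τ ⊔ x)|² dx dτ ≤ (n + 1) ‖f‖²`, and `λ(Δ') < ∞`.
-/

open Finset
open scoped ENNReal

theorem measurableEmbedding_sigmaMk {ι : Type*} {β : ι → Type*} [∀ i, MeasurableSpace (β i)]
    (a : ι) : MeasurableEmbedding (Sigma.mk (β := β) a) where
  injective := sigma_mk_injective
  measurable := fun _ hs => MeasurableSpace.measurableSet_iInf.1 hs a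
  measurableSet_image' := fun {s} hs => MeasurableSpace.measurableSet_iInf.2 fun b => by
    change MeasurableSet (Sigma.mk b ⁻¹' (Sigma.mk a '' s))
    rcases eq_or_ne a b with rfl | hab
    · rwa [sigma_mk_preimage_image_eq_self]
    · rw [sigma_mk_preimage_image' hab]
      exact .empty

theorem Fin.removeNth_succAbove_insertNth {α : Type*} {n : ℕ} (p : Fin (n + 2)) (j : Fin (n + 1))
    (x : α) (χ : Fin (n + 1) → α) :
    (p.succAbove j).removeNth (α := fun _ => α) (p.insertNth x χ) =
      (j.predAbove p).insertNth (α := fun _ => α) x (j.removeNth χ) := by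
  rw [Fin.eq_insertNth_iff]
  refine ⟨?_, funext fun k => ?_⟩
  · simp [Fin.removeNth, Fin.succAbove_succAbove_predAbove]
  · simp [Fin.removeNth, Fin.succAbove_succAbove_succAbove_predAbove]

theorem measurable_insertNth {α : Type*} [MeasurableSpace α] {n : ℕ} (k : Fin (n + 1)) :
    Measurable fun p : (Fin n → α) × α => k.insertNth (α := fun _ => α) p.2 p.1 :=
  (MeasurableEquiv.piFinSuccAbove (fun _ => α) k).symm.measurable.comp
    (measurable_snd.prodMk measurable_fst)

theorem lintegral_lintegral_insertNth {α : Type*} [MeasurableSpace α] (μ : Measure α)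
    [SigmaFinite μ] {n : ℕ} {Q : (Fin (n + 1) → α) → ℝ≥0∞} (hQ : Measurable Q)
    (k : Fin (n + 1)) :
    ∫⁻ τ, ∫⁻ x, Q (k.insertNth x τ) ∂μ ∂Measure.pi (fun _ : Fin n => μ) =
      ∫⁻ χ, Q χ ∂Measure.pi fun _ => μ := by
  have he := (measurePreserving_piFinSuccAbove (fun _ => μ) k).symm
  rw [lintegral_lintegral_swap (f := fun τ x => Q (k.insertNth x τ))
      (hQ.comp (measurable_insertNth k)).aemeasurable, ← he.lintegral_comp hQ]
  exact (lintegral_prod _ (hQ.comp he.measurable).aemeasurable).symm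

theorem quasiMeasurePreserving_removeNth {α : Type*} [MeasurableSpace α] (μ : Measure α)
    [SigmaFinite μ] {n : ℕ} (j : Fin (n + 1)) :
    Measure.QuasiMeasurePreserving (j.removeNth (α := fun _ => α))
      (Measure.pi fun _ => μ) (Measure.pi fun _ => μ) :=
  Measure.quasiMeasurePreserving_snd.comp
    (measurePreserving_piFinSuccAbove (fun _ => μ) j).quasiMeasurePreserving

namespace QuantumChains

variable {Λ : Type*}

noncomputable def insertIndex {n : ℕ} (χ : Fin n → ℝ × Λ) (x : ℝ × Λ) : Fin (n + 1) :=
  ⟨#{i | (χ i).1 < x.1}, Nat.lt_succ_of_le (card_finset_fin_le _)⟩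

theorem insertChain_eq_insertNth {n : ℕ} (χ : Fin n → ℝ × Λ) (x : ℝ × Λ) :
    insertChain χ x = (insertIndex χ x).insertNth x χ := by
  rw [Fin.eq_insertNth_iff]
  refine ⟨by simp [insertChain, insertIndex], funext fun k => ?_⟩
  have hk : (insertIndex χ x : ℕ) = #{i | (χ i).1 < x.1} := rfl
  simp only [Fin.removeNth, insertChain, Fin.succAbove, Fin.lt_def]
  have := Fin.val_succ k
  have := Fin.val_castSucc k
  split_ifs <;> first | rfl | omega

theorem castSucc_lt_insertIndex_iff {n : ℕ} {χ : Fin n → ℝ × Λ} (hχ : StrictMono fun i => (χ i).1)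
    (x : ℝ × Λ) (j : Fin n) : j.castSucc < insertIndex χ x ↔ (χ j).1 < x.1 := by
  rw [Fin.lt_def, Fin.val_castSucc]
  constructor
  · intro h
    by_contra hj
    have hsub : ({i | (χ i).1 < x.1} : Finset (Fin n)) ⊆ Iio j := fun i hi => by
      simp only [mem_filter, mem_univ, true_and] at hi
      exact mem_Iio.2 (lt_of_not_ge fun hji => hj ((hχ.monotone hji).trans_lt hi))
    have := card_le_card hsub
    rw [Fin.card_Iio] at this
    exact absurd h (not_lt.2 this)
  · intro h
    have hsub : Iic j ⊆ ({i | (χ i).1 < x.1} : Finset (Fin n)) := fun i hi => by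
      simp only [mem_filter, mem_univ, true_and]
      exact (hχ.monotone (mem_Iic.1 hi)).trans_lt h
    have := card_le_card hsub
    rw [Fin.card_Iic] at this
    exact this

theorem insertIndex_removeNth {n : ℕ} {χ : Fin (n + 1) → ℝ × Λ}
    (hχ : StrictMono fun i => (χ i).1) (x : ℝ × Λ) (j : Fin (n + 1)) :
    insertIndex (j.removeNth χ) x = j.predAbove (insertIndex χ x) := by
  have hcard : (insertIndex χ x : ℕ) =
      (if (χ j).1 < x.1 then 1 else 0) + insertIndex (j.removeNth χ) x := by
    simp only [insertIndex, card_filter]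
    rw [Fin.sum_univ_succAbove _ j]
    rfl
  ext
  simp only [Fin.predAbove]
  split_ifs with h
  · rw [castSucc_lt_insertIndex_iff hχ] at h
    simp only [Fin.val_pred]
    rw [if_pos h] at hcard
    omega
  · rw [castSucc_lt_insertIndex_iff hχ] at h
    simp only [Fin.coe_castPred]
    rw [if_neg h] at hcard
    omega

theorem strictMono_insertChain {n : ℕ} {χ : Fin n → ℝ × Λ} (hχ : StrictMono fun i => (χ i).1)
    {x : ℝ × Λ} (hx : ∀ i, (χ i).1 ≠ x.1) : StrictMono fun k => (insertChain χ x k).1 := by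
  have hbefore := castSucc_lt_insertIndex_iff hχ x
  rw [insertChain_eq_insertNth]
  set p := insertIndex χ x
  intro a b hab
  rcases p.eq_self_or_eq_succAbove a with rfl | ⟨i, rfl⟩ <;>
    rcases p.eq_self_or_eq_succAbove b with rfl | ⟨j, rfl⟩
  · exact absurd hab (lt_irrefl _)
  · rw [Fin.lt_succAbove_iff_le_castSucc, ← not_lt, hbefore] at hab
    simpa using lt_of_le_of_ne (not_lt.1 hab) (hx j).symm
  · rw [Fin.succAbove_lt_iff_castSucc_lt, hbefore] at hab
    simpa using hab
  · simpa using hχ (Fin.succAbove_lt_succAbove_iff.1 hab)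

theorem strictMono_removeNth {n : ℕ} {χ : Fin (n + 1) → ℝ × Λ} (hχ : StrictMono fun i => (χ i).1)
    (j : Fin (n + 1)) : StrictMono fun i => (j.removeNth χ i).1 :=
  hχ.comp (Fin.strictMono_succAbove j)

theorem removeNth_succAbove_insertChain {n : ℕ} {χ : Fin (n + 1) → ℝ × Λ}
    (hχ : StrictMono fun i => (χ i).1) (x : ℝ × Λ) (j : Fin (n + 1)) :
    ((insertIndex χ x).succAbove j).removeNth (insertChain χ x) =
      insertChain (j.removeNth χ) x := by
  rw [insertChain_eq_insertNth, insertChain_eq_insertNth, Fin.removeNth_succAbove_insertNth,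
    insertIndex_removeNth hχ]

/-- `P` holds at every chain `χ ∖ y`, `y ∈ χ`. -/
def ForallFaces (P : Chains Λ → Prop) : Chains Λ → Prop
  | ⟨0, _⟩ => True
  | ⟨n + 1, c⟩ => ∀ i : Fin (n + 1), P ⟨n, i.removeNth c⟩

/-- The pointwise annihilator `(a_x f)(χ) = f(χ ⊔ x)`, so that `A(Δ) = ∫_Δ a_x λ(dx)`. -/
noncomputable def pointAnnihilate (x : ℝ × Λ) (f : Chains Λ → ℂ) : Chains Λ → ℂ :=
  fun χ => f ⟨χ.1 + 1, insertChain χ.2 x⟩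

theorem pointAnnihilate_create (Δ : Set (ℝ × Λ)) (f : Chains Λ → ℂ) {n : ℕ}
    {χ : Fin n → ℝ × Λ} (hχ : χ ∈ ordered Λ n) (x : ℝ × Λ) :
    pointAnnihilate x (create Δ f) ⟨n, χ⟩ =
      Δ.indicator (fun _ => f ⟨n, χ⟩) x + create Δ (pointAnnihilate x f) ⟨n, χ⟩ := by
  simp only [pointAnnihilate, create]
  rw [Fin.sum_univ_succAbove _ (insertIndex χ x)]
  congr 1
  · simp [insertChain_eq_insertNth]
  · cases n with
    | zero => simp
    | succ m =>
      refine sum_congr rfl fun j _ => ?_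
      rw [removeNth_succAbove_insertChain hχ, insertChain_eq_insertNth χ,
        Fin.insertNth_apply_succAbove]

section

variable {X : Type*} [MeasurableSpace X] {μ : Measure X} {F : X → Chains Λ → ℂ} {χ : Chains Λ}

theorem integrable_create (Δ : Set (ℝ × Λ))
    (hF : ForallFaces (fun ψ => Integrable (F · ψ) μ) χ) :
    Integrable (fun x => create Δ (F x) χ) μ := by
  obtain ⟨_ | n, c⟩ := χ
  · exact integrable_zero _ _ _
  · refine integrable_finsetSum _ fun i _ => ?_
    by_cases h : c i ∈ Δ
    · simpa [h] using hF i
    · simp [h]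

theorem create_integral (Δ : Set (ℝ × Λ))
    (hF : ForallFaces (fun ψ => Integrable (F · ψ) μ) χ) :
    create Δ (fun ψ => ∫ x, F x ψ ∂μ) χ = ∫ x, create Δ (F x) χ ∂μ := by
  obtain ⟨_ | n, c⟩ := χ
  · simp [create]
  · simp only [create]
    rw [integral_finsetSum _ fun i _ => ?_]
    · refine sum_congr rfl fun i _ => ?_
      by_cases h : c i ∈ Δ <;> simp [h]
    · by_cases h : c i ∈ Δ
      · simpa [h] using hF i
      · simp [h]

end

variable [MeasurableSpace Λ]

theorem measurableSet_ordered (n : ℕ) : MeasurableSet (ordered Λ n) := by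
  have h : ordered Λ n = ⋂ (i : Fin n) (j : Fin n) (_ : i < j), {χ | (χ i).1 < (χ j).1} := by
    ext χ
    simp [ordered, StrictMono]
  rw [h]
  exact .iInter fun i => .iInter fun j => .iInter fun _ =>
    measurableSet_lt (measurable_pi_apply i).fst (measurable_pi_apply j).fst

theorem measurable_insertIndex {n : ℕ} :
    Measurable fun p : (Fin n → ℝ × Λ) × (ℝ × Λ) => insertIndex p.1 p.2 := by
  have hcard : Measurable fun p : (Fin n → ℝ × Λ) × (ℝ × Λ) => #{i | (p.1 i).1 < p.2.1} := by
    simp only [card_filter]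
    exact Finset.measurable_sum _ fun i _ => Measurable.ite
      (measurableSet_lt ((measurable_pi_apply i).comp measurable_fst).fst measurable_snd.fst)
      measurable_const measurable_const
  refine measurable_to_countable' fun k => ?_
  convert hcard (measurableSet_singleton (k : ℕ)) using 1
  ext p
  simp [insertIndex, Fin.ext_iff]

theorem measurable_insertChain {n : ℕ} :
    Measurable fun p : (Fin n → ℝ × Λ) × (ℝ × Λ) => insertChain p.1 p.2 := by
  have hins : Measurable fun q : ((Fin n → ℝ × Λ) × (ℝ × Λ)) × Fin (n + 1) =>
      q.2.insertNth (α := fun _ => ℝ × Λ) q.1.2 q.1.1 :=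
    measurable_from_prod_countable_left fun k => measurable_insertNth k
  simp_rw [insertChain_eq_insertNth]
  exact hins.comp (measurable_id.prodMk measurable_insertIndex)

instance sigmaFinite_baseMeasure (lam : Measure Λ) [SigmaFinite lam] :
    SigmaFinite (baseMeasure lam) := by
  unfold baseMeasure
  infer_instance

noncomputable abbrev levelMeasure (lam : Measure Λ) [SigmaFinite lam] (n : ℕ) :
    Measure (Fin n → ℝ × Λ) :=
  (Measure.pi fun _ : Fin n => baseMeasure lam).restrict (ordered Λ n)

theorem lintegral_levelMeasure_lt_top {lam : Measure Λ} [SigmaFinite lam] {f : Chains Λ → ℂ}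
    (hf : memD lam f) (n : ℕ) : ∫⁻ τ, ‖f ⟨n, τ⟩‖ₑ ^ 2 ∂levelMeasure lam n < ⊤ := by
  obtain ⟨-, ξ, hξ, hfin⟩ := hf
  refine lt_of_le_of_lt ?_ hfin
  calc ∫⁻ τ, ‖f ⟨n, τ⟩‖ₑ ^ 2 ∂levelMeasure lam n
      ≤ ∫⁻ τ, ENNReal.ofReal (ξ ^ n) * (‖f ⟨n, τ⟩‖₊ : ENNReal) ^ 2 ∂levelMeasure lam n :=
        lintegral_mono fun τ =>
          le_mul_of_one_le_left' (ENNReal.one_le_ofReal.2 (one_le_pow₀ hξ.le))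
    _ = ∫⁻ χ, ENNReal.ofReal (ξ ^ χ.1) * (‖f χ‖₊ : ENNReal) ^ 2
          ∂(levelMeasure lam n).map (Sigma.mk n) := by
        rw [(measurableEmbedding_sigmaMk n).lintegral_map]
    _ ≤ _ := lintegral_mono' (Measure.le_sum _ n) le_rfl

theorem annihilate_eq_integral_pointAnnihilate (lam : Measure Λ) (Δ : Set (ℝ × Λ))
    (f : Chains Λ → ℂ) :
    annihilate lam Δ f = fun χ => ∫ x in Δ, pointAnnihilate x f χ ∂baseMeasure lam :=
  rfl

theorem ae_fst_ne (lam : Measure Λ) [SigmaFinite lam] (t : ℝ) :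
    ∀ᵐ x ∂baseMeasure lam, x.1 ≠ t :=
  Measure.quasiMeasurePreserving_fst.ae (ae_restrict_of_ae (Measure.ae_ne volume t))

theorem lintegral_lintegral_insertChain_le (μ : Measure (ℝ × Λ)) [SigmaFinite μ] {n : ℕ}
    {Q : (Fin (n + 1) → ℝ × Λ) → ℝ≥0∞} (hQ : Measurable Q) :
    ∫⁻ τ, ∫⁻ x, Q (insertChain τ x) ∂μ ∂Measure.pi (fun _ : Fin n => μ) ≤
      (n + 1) * ∫⁻ χ, Q χ ∂Measure.pi fun _ => μ := by
  have hQk : ∀ k : Fin (n + 1), Measurable fun p : (Fin n → ℝ × Λ) × (ℝ × Λ) =>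
      Q (k.insertNth p.2 p.1) := fun k => hQ.comp (measurable_insertNth k)
  calc ∫⁻ τ, ∫⁻ x, Q (insertChain τ x) ∂μ ∂Measure.pi (fun _ : Fin n => μ)
      ≤ ∫⁻ τ, ∫⁻ x, ∑ k : Fin (n + 1), Q (k.insertNth x τ) ∂μ ∂Measure.pi (fun _ : Fin n => μ) :=
        lintegral_mono fun τ => lintegral_mono fun x => by
          rw [insertChain_eq_insertNth]
          exact single_le_sum (f := fun k : Fin (n + 1) => Q (k.insertNth x τ))
            (fun _ _ => zero_le) (mem_univ _)
    _ = ∑ k : Fin (n + 1), ∫⁻ τ, ∫⁻ x, Q (k.insertNth x τ) ∂μ ∂Measure.pi (fun _ : Fin n => μ) := by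
        have hsum : ∀ τ, ∫⁻ x, ∑ k : Fin (n + 1), Q (k.insertNth x τ) ∂μ =
            ∑ k : Fin (n + 1), ∫⁻ x, Q (k.insertNth x τ) ∂μ := fun τ =>
          lintegral_finsetSum' _ fun k _ => ((hQk k).comp measurable_prodMk_left).aemeasurable
        simp_rw [hsum]
        exact lintegral_finsetSum' _ fun k _ => (hQk k).lintegral_prod_right'.aemeasurable
    _ = (n + 1) * ∫⁻ χ, Q χ ∂Measure.pi fun _ => μ := by
        simp [lintegral_lintegral_insertNth μ hQ]

theorem ae_integrableOn_pointAnnihilate {lam : Measure Λ} [SigmaFinite lam] {f : Chains Λ → ℂ}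
    (hf : memD lam f) {s : Set (ℝ × Λ)} (hs : baseMeasure lam s < ⊤) (n : ℕ) :
    ∀ᵐ τ ∂levelMeasure lam n,
      IntegrableOn (fun x => pointAnnihilate x f ⟨n, τ⟩) s (baseMeasure lam) := by
  set μ := baseMeasure lam
  set Q := (ordered Λ (n + 1)).indicator fun χ => ‖f ⟨n + 1, χ⟩‖ₑ ^ 2
  have hfm : Measurable fun χ => f ⟨n + 1, χ⟩ :=
    hf.1.comp (measurableEmbedding_sigmaMk (n + 1)).measurable
  have hQ : Measurable Q := (hfm.enorm.pow_const 2).indicator (measurableSet_ordered _)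
  have hQins : Measurable fun p : (Fin n → ℝ × Λ) × (ℝ × Λ) => Q (insertChain p.1 p.2) :=
    hQ.comp measurable_insertChain
  have hfinite : ∫⁻ τ, ∫⁻ x, Q (insertChain τ x) ∂μ ∂levelMeasure lam n < ⊤ :=
    calc ∫⁻ τ, ∫⁻ x, Q (insertChain τ x) ∂μ ∂levelMeasure lam n
        ≤ ∫⁻ τ, ∫⁻ x, Q (insertChain τ x) ∂μ ∂Measure.pi (fun _ : Fin n => μ) :=
          lintegral_mono' Measure.restrict_le_self le_rfl
      _ ≤ (n + 1) * ∫⁻ χ, Q χ ∂Measure.pi fun _ => μ := lintegral_lintegral_insertChain_le μ hQ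
      _ < ⊤ := by
          rw [lintegral_indicator (measurableSet_ordered _)]
          exact ENNReal.mul_lt_top (by simp) (lintegral_levelMeasure_lt_top hf (n + 1))
  filter_upwards [ae_lt_top hQins.lintegral_prod_right' hfinite.ne,
    ae_restrict_mem (measurableSet_ordered n)] with τ hτ hord
  -- `τ ⊔ x` stays time-ordered unless `x` ties with a point of `τ`, which is a null event.
  have hsq : ∀ᵐ x ∂μ, ‖f ⟨n + 1, insertChain τ x⟩‖ₑ ^ 2 = Q (insertChain τ x) := by
    filter_upwards [ae_all_iff.2 fun i => ae_fst_ne lam (τ i).1] with x hx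
    have hins : insertChain τ x ∈ ordered Λ (n + 1) :=
      strictMono_insertChain hord fun i => (hx i).symm
    exact (Set.indicator_of_mem hins fun χ => ‖f ⟨n + 1, χ⟩‖ₑ ^ 2).symm
  have hL2 : MemLp (fun x => f ⟨n + 1, insertChain τ x⟩) 2 μ := by
    refine ⟨(hfm.comp (measurable_insertChain.comp measurable_prodMk_left)).aestronglyMeasurable,
      ?_⟩
    rw [eLpNorm_lt_top_iff_lintegral_rpow_enorm_lt_top two_ne_zero ENNReal.ofNat_ne_top]
    simpa [lintegral_congr_ae hsq] using hτ
  have : IsFiniteMeasure (μ.restrict s) := isFiniteMeasure_restrict.2 hs.ne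
  exact (hL2.restrict s).integrable one_le_two

theorem ae_levelMeasure_removeNth {lam : Measure Λ} [SigmaFinite lam] {n : ℕ}
    {P : (Fin n → ℝ × Λ) → Prop} (hP : ∀ᵐ τ ∂levelMeasure lam n, P τ) (j : Fin (n + 1)) :
    ∀ᵐ χ ∂levelMeasure lam (n + 1), P (j.removeNth χ) := by
  rw [ae_restrict_iff' (measurableSet_ordered _)] at hP ⊢
  filter_upwards [(quasiMeasurePreserving_removeNth _ j).ae hP] with χ hχ hord
  exact hχ (strictMono_removeNth hord j)

theorem ae_forallFaces {lam : Measure Λ} [SigmaFinite lam] {P : Chains Λ → Prop}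
    (hP : ∀ n, ∀ᵐ τ ∂levelMeasure lam n, P ⟨n, τ⟩) (n : ℕ) :
    ∀ᵐ χ ∂levelMeasure lam n, ForallFaces P ⟨n, χ⟩ := by
  cases n with
  | zero => exact .of_forall fun _ => trivial
  | succ m => exact ae_all_iff.2 fun j => ae_levelMeasure_removeNth (hP m) j

theorem annihilate_create_sub_create_annihilate {lam : Measure Λ} [SigmaFinite lam]
    {Δ Δ' : Set (ℝ × Λ)} (hΔ : MeasurableSet Δ) (hΔ' : baseMeasure lam Δ' < ⊤)
    {f : Chains Λ → ℂ} {n : ℕ} {χ : Fin n → ℝ × Λ} (hχ : χ ∈ ordered Λ n)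
    (hfaces : ForallFaces (fun ψ => IntegrableOn (fun x => pointAnnihilate x f ψ) Δ'
      (baseMeasure lam)) ⟨n, χ⟩) :
    annihilate lam Δ' (create Δ f) ⟨n, χ⟩ - create Δ (annihilate lam Δ' f) ⟨n, χ⟩ =
      ((baseMeasure lam (Δ ∩ Δ')).toReal : ℂ) * f ⟨n, χ⟩ := by
  have : IsFiniteMeasure ((baseMeasure lam).restrict Δ') := isFiniteMeasure_restrict.2 hΔ'.ne
  have hind : Integrable (Δ.indicator fun _ => f ⟨n, χ⟩) ((baseMeasure lam).restrict Δ') :=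
    (integrable_indicator_iff hΔ).2 (integrable_const _).integrableOn
  simp only [annihilate_eq_integral_pointAnnihilate, pointAnnihilate_create Δ f hχ]
  rw [integral_add hind (integrable_create Δ hfaces), create_integral Δ hfaces,
    integral_indicator_const _ hΔ, measureReal_restrict_apply hΔ, measureReal_def,
    Complex.real_smul, add_sub_cancel_right]

theorem canonical_commutation_general (lam : Measure Λ) [SigmaFinite lam]
    (Δ Δ' : Set (ℝ × Λ)) (hΔ : MeasurableSet Δ)
    (hΔ'fin : baseMeasure lam Δ' < ⊤)
    (f : Chains Λ → ℂ) (hf : memD lam f) :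
    ∀ᵐ χ ∂(chainMeasure lam),
      annihilate lam Δ' (create Δ f) χ - create Δ (annihilate lam Δ' f) χ =
        ((baseMeasure lam (Δ ∩ Δ')).toReal : ℂ) * f χ := by
  rw [chainMeasure, Measure.ae_sum_iff]
  intro n
  rw [(measurableEmbedding_sigmaMk n).ae_map_iff]
  filter_upwards [ae_restrict_mem (measurableSet_ordered n),
    ae_forallFaces (P := fun ψ => IntegrableOn (fun x => pointAnnihilate x f ψ) Δ' _)
      (ae_integrableOn_pointAnnihilate hf hΔ'fin) n] with χ hχ hfaces
  exact annihilate_create_sub_create_annihilate hΔ hΔ'fin hχ hfaces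

/-- For all measurable `Δ, Δ' ⊆ Γ₁` of finite measure, the
operators `A(Δ')` and `A*(Δ)` satisfy the canonical commutation relation on
the domain `D`: `A(Δ')A*(Δ)f − A*(Δ)A(Δ')f = λ(Δ ∩ Δ') · f`. -/
theorem canonical_commutation (lam : Measure Λ) [SigmaFinite lam]
    (Δ Δ' : Set (ℝ × Λ)) (hΔ : MeasurableSet Δ) (hΔ' : MeasurableSet Δ')
    (hΔfin : baseMeasure lam Δ < ⊤) (hΔ'fin : baseMeasure lam Δ' < ⊤)
    (f : Chains Λ → ℂ) (hf : memD lam f) :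
    ∀ᵐ χ ∂(chainMeasure lam),
      annihilate lam Δ' (create Δ f) χ - create Δ (annihilate lam Δ' f) χ =
        ((baseMeasure lam (Δ ∩ Δ')).toReal : ℂ) * f χ :=
  canonical_commutation_general lam Δ Δ' hΔ hΔ'fin f hf

end QuantumChains
end

section
/- If ω c ε = ε c ω, then the positive bounded operator p_∞ := ½ ε^{-1/2} |c̃| ε^{-1/2} satisfies p_∞ ε p_∞ = ¼ c ε c and p_∞ ω c = c ω p_∞; hence the constant function p(t) ≡ p_∞ is a stationary positive solution of the operator Riccati equation dp/dt + i(p ω c − c ω p) + p ε p = ¼ c ε c. -/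
/-!
Write `t = ε^{1/2} c ε^{1/2}` and `x = ε^{-1/2} ω c ε^{1/2}`. The hypothesis `ω c ε = ε c ω` says
exactly that `x = ε^{1/2} c ω ε^{-1/2}`, and with the two expressions for `x` one computes
`t x = ε^{1/2} c ω c ε^{1/2} = x t`. So `x` commutes with `t²`, hence with its square root `|t|`,
and conjugating `|t| x = x |t|` back by `ε^{-1/2}` gives `p_∞ ω c = c ω p_∞`. The identity
`p_∞ ε p_∞ = ¼ c ε c` is `|t|² = t²` conjugated by `ε^{-1/2}`.
-/

section Monoid

variable {M : Type*} [Monoid M] (u : Mˣ)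

theorem Units.inv_mul_mul_eq_mul_mul_inv_of_mul_sq {x y : M} (h : x * (u * u) = (u * u) * y) :
    ↑u⁻¹ * x * u = u * y * ↑u⁻¹ :=
  calc ↑u⁻¹ * x * u = ↑u⁻¹ * (x * (u * u)) * ↑u⁻¹ := by
        simp only [mul_assoc, Units.mul_inv, mul_one]
    _ = ↑u⁻¹ * ((u * u) * y) * ↑u⁻¹ := by rw [h]
    _ = u * y * ↑u⁻¹ := by simp only [mul_assoc, Units.inv_mul_cancel_left]

theorem Units.commute_mul_mul_of_inv_mul_mul_eq {c w : M}
    (h : ↑u⁻¹ * (w * c) * u = u * (c * w) * ↑u⁻¹) :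
    Commute (u * c * u) (↑u⁻¹ * (w * c) * u) := by
  calc u * c * u * (↑u⁻¹ * (w * c) * u) = u * c * w * c * u := by
        simp only [mul_assoc, Units.mul_inv_cancel_left]
    _ = u * (c * w) * ↑u⁻¹ * (u * c * u) := by simp only [mul_assoc, Units.inv_mul_cancel_left]
    _ = ↑u⁻¹ * (w * c) * u * (u * c * u) := by rw [h]

theorem Units.inv_mul_mul_inv_mul_sq_mul_eq {a c : M} (ha : a * a = (u * c * u) * (u * c * u)) :
    (↑u⁻¹ * a * ↑u⁻¹) * (u * u) * (↑u⁻¹ * a * ↑u⁻¹) = c * (u * u) * c :=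
  calc (↑u⁻¹ * a * ↑u⁻¹) * (u * u) * (↑u⁻¹ * a * ↑u⁻¹) = ↑u⁻¹ * (a * a) * ↑u⁻¹ := by
        simp only [mul_assoc, Units.inv_mul_cancel_left, Units.mul_inv_cancel_left]
    _ = c * (u * u) * c := by
        rw [ha]
        simp only [mul_assoc, Units.inv_mul_cancel_left, Units.mul_inv, mul_one]

end Monoid

section ContinuousFunctionalCalculus

variable {A : Type*} [Ring A] [StarRing A] [Algebra ℝ A] [TopologicalSpace A]
  [ContinuousFunctionalCalculus ℝ A IsSelfAdjoint] [IsTopologicalRing A] [T2Space A]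
  [PartialOrder A] [NonnegSpectrumClass ℝ A] [StarOrderedRing A]

theorem Commute.of_mul_self_left {a b : A} (ha : 0 ≤ a) (h : Commute (a * a) b) :
    Commute a b := by
  rw [← CFC.sqrt_mul_self a ha, CFC.sqrt_eq_cfc]
  exact h.cfc_nnreal _

theorem Units.inv_mul_mul_inv_mul_mul_comm (u : Aˣ) {a c w : A} (ha : 0 ≤ a)
    (haa : a * a = (u * c * u) * (u * c * u)) (hcomm : w * c * (u * u) = (u * u) * c * w) :
    (↑u⁻¹ * a * ↑u⁻¹) * w * c = c * w * (↑u⁻¹ * a * ↑u⁻¹) := by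
  have hx : ↑u⁻¹ * (w * c) * u = u * (c * w) * ↑u⁻¹ :=
    u.inv_mul_mul_eq_mul_mul_inv_of_mul_sq (by simpa only [mul_assoc] using hcomm)
  have hcommute : Commute a (↑u⁻¹ * (w * c) * u) := by
    have ht := u.commute_mul_mul_of_inv_mul_mul_eq hx
    exact .of_mul_self_left ha (haa ▸ ht.mul_left ht)
  calc (↑u⁻¹ * a * ↑u⁻¹) * w * c = ↑u⁻¹ * (a * (↑u⁻¹ * (w * c) * u)) * ↑u⁻¹ := by
        simp only [mul_assoc, Units.mul_inv, mul_one]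
    _ = ↑u⁻¹ * (↑u⁻¹ * (w * c) * u * a) * ↑u⁻¹ := by rw [hcommute.eq]
    _ = c * w * (↑u⁻¹ * a * ↑u⁻¹) := by
        rw [hx]; simp only [mul_assoc, Units.inv_mul_cancel_left]

end ContinuousFunctionalCalculus

open ContinuousLinearMap

theorem stationary_Riccati_solution_general
    {H : Type*} [NormedAddCommGroup H] [InnerProductSpace ℂ H]
    [CompleteSpace H]
    (ε ω c e einv a : H →L[ℂ] H)
    (hee : e * e = ε)
    (heinv : einv.IsPositive) (hei : einv * e = 1) (hie : e * einv = 1)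
    (ha : a.IsPositive) (haa : a * a = (e * c * e) * (e * c * e))
    (hcomm : ω * c * ε = ε * c * ω) :
    (((2 : ℂ)⁻¹ • (einv * a * einv)).IsPositive) ∧
    ((2 : ℂ)⁻¹ • (einv * a * einv)) * ε * ((2 : ℂ)⁻¹ • (einv * a * einv)) =
      (4 : ℂ)⁻¹ • (c * ε * c) ∧
    ((2 : ℂ)⁻¹ • (einv * a * einv)) * ω * c =
      c * ω * ((2 : ℂ)⁻¹ • (einv * a * einv)) ∧
    Complex.I • (((2 : ℂ)⁻¹ • (einv * a * einv)) * ω * c -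
        c * ω * ((2 : ℂ)⁻¹ • (einv * a * einv))) +
      ((2 : ℂ)⁻¹ • (einv * a * einv)) * ε * ((2 : ℂ)⁻¹ • (einv * a * einv)) =
        (4 : ℂ)⁻¹ • (c * ε * c) := by
  let u : (H →L[ℂ] H)ˣ := ⟨e, einv, hie, hei⟩
  subst hee
  have hpos : (einv * a * einv).IsPositive := by
    have h := ha.conj_adjoint einv
    rwa [← star_eq_adjoint, heinv.isSelfAdjoint.star_eq] at h
  have hquad : (einv * a * einv) * (e * e) * (einv * a * einv) = c * (e * e) * c :=
    u.inv_mul_mul_inv_mul_sq_mul_eq haa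
  have hsym : (einv * a * einv) * ω * c = c * ω * (einv * a * einv) :=
    u.inv_mul_mul_inv_mul_mul_comm ((nonneg_iff_isPositive a).mpr ha) haa hcomm
  have hquad' : ((2 : ℂ)⁻¹ • (einv * a * einv)) * (e * e) * ((2 : ℂ)⁻¹ • (einv * a * einv)) =
      (4 : ℂ)⁻¹ • (c * (e * e) * c) := by
    rw [smul_mul_assoc, smul_mul_assoc, mul_smul_comm, smul_smul, hquad]
    norm_num
  have hsym' : ((2 : ℂ)⁻¹ • (einv * a * einv)) * ω * c =
      c * ω * ((2 : ℂ)⁻¹ • (einv * a * einv)) := by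
    rw [smul_mul_assoc, smul_mul_assoc, mul_smul_comm, hsym]
  refine ⟨hpos.smul_of_nonneg (by norm_num [Complex.le_def]), hquad', hsym', ?_⟩
  rw [hsym', sub_self, smul_zero, zero_add, hquad']

theorem stationary_Riccati_solution
    {H : Type*} [NormedAddCommGroup H] [InnerProductSpace ℂ H]
    [CompleteSpace H]
    (ε ω c e einv a : H →L[ℂ] H)
    (hε : ε.IsPositive) (hω : IsSelfAdjoint ω) (hc : IsSelfAdjoint c)
    (he : e.IsPositive) (hee : e * e = ε)
    (heinv : einv.IsPositive) (hei : einv * e = 1) (hie : e * einv = 1)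
    (ha : a.IsPositive) (haa : a * a = (e * c * e) * (e * c * e))
    (hcomm : ω * c * ε = ε * c * ω) :
    (((2 : ℂ)⁻¹ • (einv * a * einv)).IsPositive) ∧
    ((2 : ℂ)⁻¹ • (einv * a * einv)) * ε * ((2 : ℂ)⁻¹ • (einv * a * einv)) =
      (4 : ℂ)⁻¹ • (c * ε * c) ∧
    ((2 : ℂ)⁻¹ • (einv * a * einv)) * ω * c =
      c * ω * ((2 : ℂ)⁻¹ • (einv * a * einv)) ∧
    Complex.I • (((2 : ℂ)⁻¹ • (einv * a * einv)) * ω * c -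
        c * ω * ((2 : ℂ)⁻¹ • (einv * a * einv))) +
      ((2 : ℂ)⁻¹ • (einv * a * einv)) * ε * ((2 : ℂ)⁻¹ • (einv * a * einv)) =
        (4 : ℂ)⁻¹ • (c * ε * c) :=
  stationary_Riccati_solution_general ε ω c e einv a hee heinv hei hie ha haa hcomm
end

section
/- Let ε > 0 and c ∈ ℝ with c ≠ 0. Set q₀ = (2 − |c|)/(2 + |c|), q(t) = q₀ e^{−ε|c|t}, and p(t) = (|c|/2) · (1 + q(t))/(1 − q(t)). Then |q₀| < 1, the denominator 1 − q(t) is strictly positive for all t ≥ 0, p is differentiable on [0,∞) with p(0) = 1 and p'(t) = ε( c²/4 − p(t)² ) for all t ≥ 0, p(t) → |c|/2 as t → ∞, and the convergence is exponential: |p(t) − |c|/2| ≤ ( |c| |q₀| / (1 − |q₀|) ) e^{−ε|c|t} for all t ≥ 0. -/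
/-!
The substitution `p = (a/2)(1 + q)/(1 − q)` with `a = |c|` turns the Riccati equation
`p' = ε(a²/4 − p²)` into the linear equation `q' = −εa q`, so `q` decays exponentially from
`q₀`, which is chosen so that `p(0) = 1`. Since `|q₀| < 1`, the denominator stays above
`1 − |q₀| > 0`, and `p − a/2 = a q/(1 − q)` gives the rate of convergence.
-/

open Filter Topology

namespace ScalarRiccati

noncomputable def mobius (a x : ℝ) : ℝ := a / 2 * (1 + x) / (1 - x)

lemma mobius_sub_half {a x : ℝ} (hx : 1 - x ≠ 0) : mobius a x - a / 2 = a * x / (1 - x) := by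
  unfold mobius
  field_simp
  ring

lemma mobius_sub_div_add {a b : ℝ} (ha : a ≠ 0) (hab : b + a ≠ 0) :
    mobius a ((b - a) / (b + a)) = b / 2 := by
  have hden : 1 - (b - a) / (b + a) = 2 * a / (b + a) := by field_simp; ring
  have hnum : 1 + (b - a) / (b + a) = 2 * b / (b + a) := by field_simp; ring
  rw [mobius, hden, hnum]
  field_simp

lemma abs_mobius_sub_half_le {a x r : ℝ} (ha : 0 ≤ a) (hx : |x| ≤ r) (hr : r < 1) :
    |mobius a x - a / 2| ≤ a * |x| / (1 - r) := by
  have hxr : x ≤ r := (le_abs_self x).trans hx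
  rw [mobius_sub_half (by linarith), abs_div, abs_mul, abs_of_nonneg ha,
    abs_of_pos (by linarith : 0 < 1 - x)]
  gcongr

lemma abs_sub_div_add_lt_one {a b : ℝ} (ha : 0 < a) (hb : 0 < b) : |(b - a) / (b + a)| < 1 := by
  rw [abs_div, abs_of_pos (add_pos hb ha), div_lt_one (add_pos hb ha), abs_lt]
  constructor <;> linarith

lemma abs_mul_exp_neg_le {q₀ k t : ℝ} (hk : 0 ≤ k) (ht : 0 ≤ t) :
    |q₀ * Real.exp (-(k * t))| ≤ |q₀| := by
  rw [abs_mul, Real.abs_exp]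
  exact mul_le_of_le_one_right (abs_nonneg _) (Real.exp_le_one_iff.2 (by nlinarith))

lemma hasDerivAt_mul_exp_neg (q₀ k t : ℝ) :
    HasDerivAt (fun s => q₀ * Real.exp (-(k * s))) (-k * (q₀ * Real.exp (-(k * t)))) t := by
  have hlin : HasDerivAt (fun s => -(k * s)) (-k) t := by
    simpa using ((hasDerivAt_id t).const_mul k).fun_neg
  exact (hlin.exp.const_mul q₀).congr_deriv (by ring)

lemma hasDerivAt_mobius_of_linear {q : ℝ → ℝ} {ε a t : ℝ}
    (hq : HasDerivAt q (-(ε * a) * q t) t) (hden : 1 - q t ≠ 0) :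
    HasDerivAt (fun s => mobius a (q s)) (ε * (a ^ 2 / 4 - mobius a (q t) ^ 2)) t := by
  have h := ((hq.const_add 1).const_mul (a / 2)).div (hq.const_sub 1) hden
  exact h.congr_deriv (by unfold mobius; field_simp; ring)

lemma tendsto_mobius_half {α : Type*} {l : Filter α} {q : α → ℝ} (a : ℝ)
    (hq : Tendsto q l (𝓝 0)) : Tendsto (fun s => mobius a (q s)) l (𝓝 (a / 2)) := by
  have h := ((hq.const_add 1).const_mul (a / 2)).div (hq.const_sub 1) (by norm_num)
  rwa [add_zero, sub_zero, mul_one, div_one] at h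

end ScalarRiccati

open ScalarRiccati

theorem scalar_Riccati_solution (ε c : ℝ) (hε : 0 < ε) (hc : c ≠ 0) :
    let q₀ : ℝ := (2 - |c|) / (2 + |c|)
    let q : ℝ → ℝ := fun t => q₀ * Real.exp (-(ε * |c| * t))
    let p : ℝ → ℝ := fun t => (|c| / 2) * (1 + q t) / (1 - q t)
    |q₀| < 1 ∧
    (∀ t : ℝ, 0 ≤ t → 0 < 1 - q t) ∧
    p 0 = 1 ∧
    (∀ t : ℝ, 0 ≤ t → HasDerivAt p (ε * (c ^ 2 / 4 - (p t) ^ 2)) t) ∧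
    Tendsto p atTop (nhds (|c| / 2)) ∧
    ∀ t : ℝ, 0 ≤ t →
      |p t - |c| / 2| ≤ (|c| * |q₀| / (1 - |q₀|)) * Real.exp (-(ε * |c| * t)) := by
  intro q₀ q p
  have ha : 0 < |c| := abs_pos.2 hc
  have hk : 0 < ε * |c| := mul_pos hε ha
  have hq₀ : |q₀| < 1 := abs_sub_div_add_lt_one ha two_pos
  have hq_le (t : ℝ) (ht : 0 ≤ t) : |q t| ≤ |q₀| := abs_mul_exp_neg_le hk.le ht
  have hden (t : ℝ) (ht : 0 ≤ t) : 0 < 1 - q t :=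
    sub_pos.2 ((le_abs_self _).trans_lt ((hq_le t ht).trans_lt hq₀))
  refine ⟨hq₀, hden, ?_, fun t ht => ?_, ?_, fun t ht => ?_⟩
  · show mobius |c| (q₀ * Real.exp (-(ε * |c| * 0))) = 1
    rw [mul_zero, neg_zero, Real.exp_zero, mul_one]
    simpa using mobius_sub_div_add ha.ne' (by positivity : (2 : ℝ) + |c| ≠ 0)
  · rw [← sq_abs c]
    exact hasDerivAt_mobius_of_linear (hasDerivAt_mul_exp_neg q₀ (ε * |c|) t) (hden t ht).ne'
  · have hq : Tendsto q atTop (𝓝 0) := by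
      simpa using (Real.tendsto_exp_neg_atTop_nhds_zero.comp
        (tendsto_id.const_mul_atTop hk)).const_mul q₀
    exact tendsto_mobius_half |c| hq
  · calc |p t - |c| / 2| ≤ |c| * |q t| / (1 - |q₀|) :=
          abs_mobius_sub_half_le ha.le (hq_le t ht) hq₀
      _ = (|c| * |q₀| / (1 - |q₀|)) * Real.exp (-(ε * |c| * t)) := by
        rw [abs_mul, Real.abs_exp]
        ring
end
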